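/- Let Γ be a finitely generated group with the U-property: there exist g₁,…,g_p ∈ Γ and constants A, B > 0 with ‖γ‖ ≤ A·sup_i ℓ(g_i γ) + B for all γ ∈ Γ, where ‖·‖ is word length and ℓ is the translation length in the Cayley graph. If Γ acts by isometries on a metric space Y and the action is well-displacing (d_Y(γ) ≥ α·ℓ(γ) − β for constants α, β > 0, where d_Y(γ) = inf_{x} d(x, γx)), then for any x ∈ Y the orbit map γ ↦ γx is a quasi-isometric embedding of Γ (with the word metric) into Y. -/

import Mathlib

/-- The word length of `γ` with respect to a generating set `S`. -/
noncomputable def wordLength {G : Type*} [Group G] (S : Set G) (γ : G) : ℕ :=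
  sInf {n | ∃ l : List G, (∀ s ∈ l, s ∈ S) ∧ l.length = n ∧ l.prod = γ}

/-- The translation length in the Cayley graph: the conjugacy-minimal word length. -/
noncomputable def stableLength {G : Type*} [Group G] (S : Set G) (γ : G) : ℕ :=
  sInf {n | ∃ η : G, wordLength S (η * γ * η⁻¹) = n}

/-!
The upper bound holds for any isometric action: by the triangle inequality each generator in a
geodesic word moves `x` by at most `∑ s ∈ S, d(x, s x)`. For the lower bound, the
well-displacing inequality applied at the point `x` bounds `ℓ(gᵢγ)` by
`(d(x, gᵢγx) + β) / α ≤ (d(x, γx) + d(x, gᵢx) + β) / α`, and the U-property turns this bound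
on the stable lengths into a bound on `‖γ‖`.
-/

section WordLength

variable {G : Type*} [Group G] {S : Set G}

lemma exists_list_length_eq_wordLength (hsymm : ∀ s ∈ S, s⁻¹ ∈ S)
    (hgen : Subgroup.closure S = ⊤) (γ : G) :
    ∃ l : List G, (∀ s ∈ l, s ∈ S) ∧ l.length = wordLength S γ ∧ l.prod = γ := by
  have hinv : S⁻¹ ⊆ S := fun s hs => by simpa using hsymm s⁻¹ hs
  have hγ : γ ∈ (Subgroup.closure S).toSubmonoid := by simp [hgen]
  rw [Subgroup.closure_toSubmonoid, Set.union_eq_left.mpr hinv] at hγ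
  obtain ⟨l, hlS, hprod⟩ := Submonoid.exists_list_of_mem_closure hγ
  exact Nat.sInf_mem (s := {n | ∃ l : List G, (∀ s ∈ l, s ∈ S) ∧ l.length = n ∧ l.prod = γ})
    ⟨l.length, l, hlS, rfl, hprod⟩

end WordLength

section IsometricAction

variable {Γ Y : Type*} [Group Γ] [PseudoMetricSpace Y] [MulAction Γ Y]

lemma iInf_dist_smul_le (x : Y) (γ : Γ) : ⨅ y : Y, dist y (γ • y) ≤ dist x (γ • x) :=
  ciInf_le ⟨0, by rintro _ ⟨y, rfl⟩; exact dist_nonneg⟩ x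

variable [IsIsometricSMul Γ Y]

lemma dist_mul_smul_le (x : Y) (g h : Γ) :
    dist x ((g * h) • x) ≤ dist x (g • x) + dist x (h • x) :=
  calc dist x ((g * h) • x) ≤ dist x (g • x) + dist (g • x) (g • h • x) := by
        rw [mul_smul]; exact dist_triangle _ _ _
    _ = dist x (g • x) + dist x (h • x) := by rw [dist_smul]

lemma dist_list_prod_smul_le (x : Y) {C : ℝ} {l : List Γ} (hl : ∀ s ∈ l, dist x (s • x) ≤ C) :
    dist x (l.prod • x) ≤ C * l.length := by
  induction l with
  | nil => simp
  | cons s t ih =>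
    have hs := hl s List.mem_cons_self
    have ht := ih fun a ha => hl a (List.mem_cons_of_mem _ ha)
    calc dist x ((s :: t).prod • x) ≤ dist x (s • x) + dist x (t.prod • x) :=
          dist_mul_smul_le x s t.prod
      _ ≤ C * (s :: t).length := by push_cast [List.length_cons]; linarith

lemma dist_smul_le_wordLength_mul (S : Finset Γ) (hsymm : ∀ s ∈ S, s⁻¹ ∈ S)
    (hgen : Subgroup.closure (S : Set Γ) = ⊤) (x : Y) (γ : Γ) :
    dist x (γ • x) ≤ (∑ s ∈ S, dist x (s • x)) * wordLength (S : Set Γ) γ := by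
  obtain ⟨l, hlS, hlen, rfl⟩ := exists_list_length_eq_wordLength hsymm hgen γ
  rw [← hlen]
  refine dist_list_prod_smul_le x fun s hs => ?_
  exact Finset.single_le_sum (f := fun s => dist x (s • x)) (fun _ _ => dist_nonneg) (hlS s hs)

lemma wordLength_le_of_uProperty_of_wellDisplacing {S : Set Γ} {p : ℕ} (g : Fin p → Γ)
    {A B : ℝ} (hA : 0 ≤ A)
    (hU : ∀ γ : Γ, (wordLength S γ : ℝ) ≤
      A * ((Finset.univ.sup fun i : Fin p => stableLength S (g i * γ) : ℕ) : ℝ) + B)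
    {α β : ℝ} (hα : 0 < α) (hβ : 0 ≤ β)
    (hWD : ∀ γ : Γ, α * (stableLength S γ : ℝ) - β ≤ ⨅ y : Y, dist y (γ • y)) (x : Y) (γ : Γ) :
    (wordLength S γ : ℝ) ≤
      A / α * dist x (γ • x) + (A / α * (∑ i, dist x (g i • x) + β) + B) := by
  set M := (dist x (γ • x) + ∑ i, dist x (g i • x) + β) / α
  have hstable : ∀ i, (stableLength S (g i * γ) : ℝ) ≤ M := fun i => by
    have hgi : dist x (g i • x) ≤ ∑ j, dist x (g j • x) :=
      Finset.single_le_sum (f := fun j => dist x (g j • x)) (fun _ _ => dist_nonneg)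
        (Finset.mem_univ i)
    have hdisp := (hWD (g i * γ)).trans ((iInf_dist_smul_le x _).trans (dist_mul_smul_le x (g i) γ))
    rw [le_div_iff₀ hα]
    linarith
  have hsup : ((Finset.univ.sup fun i : Fin p => stableLength S (g i * γ) : ℕ) : ℝ) ≤ M := by
    have hM : 0 ≤ M := by positivity
    exact (Nat.cast_le.mpr (Finset.sup_le fun i _ => Nat.le_floor (hstable i))).trans
      (Nat.floor_le hM)
  calc (wordLength S γ : ℝ) ≤ A * M + B := (hU γ).trans (by gcongr)
    _ = _ := by ring

end IsometricAction

lemma exists_quasiIsometric_bounds {ι : Type*} {w d : ι → ℝ} {a b c : ℝ}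
    (hw : ∀ i, 0 ≤ w i) (hd : ∀ i, 0 ≤ d i)
    (hlow : ∀ i, w i ≤ a * d i + b) (hup : ∀ i, d i ≤ c * w i) :
    ∃ K : ℝ, 0 < K ∧ ∃ L : ℝ, 0 < L ∧ ∀ i, K⁻¹ * w i - L ≤ d i ∧ d i ≤ K * w i + L := by
  set K := max (max a c) 1
  have hK1 : 1 ≤ K := le_max_right _ _
  have hK : 0 < K := one_pos.trans_le hK1
  refine ⟨K, hK, |b| + 1, by positivity, fun i => ⟨?_, ?_⟩⟩
  · have had : a * d i ≤ K * d i := by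
      gcongr
      · exact hd i
      · exact le_max_of_le_left (le_max_left _ _)
    rw [sub_le_iff_le_add, inv_mul_le_iff₀ hK]
    nlinarith [hlow i, le_abs_self b, le_mul_of_one_le_left (abs_nonneg b) hK1]
  · have hcw : c * w i ≤ K * w i := by
      gcongr
      · exact hw i
      · exact le_max_of_le_left (le_max_right _ _)
    linarith [hup i, abs_nonneg b]

theorem stmt4_general {Γ Y : Type*} [Group Γ] [MetricSpace Y] [MulAction Γ Y]
    (hiso : ∀ γ : Γ, Isometry (fun y : Y => γ • y))
    (S : Finset Γ)
    (hsymm : ∀ s ∈ S, s⁻¹ ∈ S)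
    (hgen : Subgroup.closure (S : Set Γ) = ⊤)
    -- the U-property
    (p : ℕ) (g : Fin p → Γ) (A B : ℝ) (hA : 0 < A)
    (hU : ∀ γ : Γ, (wordLength (S : Set Γ) γ : ℝ) ≤
      A * ((Finset.univ.sup fun i : Fin p => stableLength (S : Set Γ) (g i * γ) : ℕ) : ℝ) + B)
    -- the action is well-displacing
    (α β : ℝ) (hα : 0 < α) (hβ : 0 < β)
    (hWD : ∀ γ : Γ, α * (stableLength (S : Set Γ) γ : ℝ) - β ≤ ⨅ y : Y, dist y (γ • y)) :
    ∀ x : Y, ∃ A' : ℝ, 0 < A' ∧ ∃ B' : ℝ, 0 < B' ∧ ∀ γ : Γ,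
      A'⁻¹ * (wordLength (S : Set Γ) γ : ℝ) - B' ≤ dist x (γ • x) ∧
      dist x (γ • x) ≤ A' * (wordLength (S : Set Γ) γ : ℝ) + B' := by
  intro x
  have : IsIsometricSMul Γ Y := ⟨hiso⟩
  exact exists_quasiIsometric_bounds (fun _ => Nat.cast_nonneg _) (fun _ => dist_nonneg)
    (wordLength_le_of_uProperty_of_wellDisplacing g hA.le hU hα hβ.le hWD x)
    (dist_smul_le_wordLength_mul S hsymm hgen x)

/-- Let `Γ` be finitely generated with the U-property (there exist
`g₁, …, g_p` and constants `A, B > 0` with `‖γ‖ ≤ A · sup_i ℓ(gᵢγ) + B` for all `γ`).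
If `Γ` acts by isometries on a metric space `Y` and the action is well-displacing
(`d_Y(γ) ≥ α·ℓ(γ) − β`), then every orbit map `γ ↦ γ·x` is a quasi-isometric embedding. -/
theorem stmt4 {Γ Y : Type*} [Group Γ] [MetricSpace Y] [Nonempty Y] [MulAction Γ Y]
    (hiso : ∀ γ : Γ, Isometry (fun y : Y => γ • y))
    (S : Finset Γ) (hSne : S.Nonempty)
    (hsymm : ∀ s ∈ S, s⁻¹ ∈ S)
    (hgen : Subgroup.closure (S : Set Γ) = ⊤)
    -- the U-property
    (p : ℕ) (g : Fin p → Γ) (A B : ℝ) (hA : 0 < A) (hB : 0 < B)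
    (hU : ∀ γ : Γ, (wordLength (S : Set Γ) γ : ℝ) ≤
      A * ((Finset.univ.sup fun i : Fin p => stableLength (S : Set Γ) (g i * γ) : ℕ) : ℝ) + B)
    -- the action is well-displacing
    (α β : ℝ) (hα : 0 < α) (hβ : 0 < β)
    (hWD : ∀ γ : Γ, α * (stableLength (S : Set Γ) γ : ℝ) - β ≤ ⨅ y : Y, dist y (γ • y)) :
    ∀ x : Y, ∃ A' : ℝ, 0 < A' ∧ ∃ B' : ℝ, 0 < B' ∧ ∀ γ : Γ,
      A'⁻¹ * (wordLength (S : Set Γ) γ : ℝ) - B' ≤ dist x (γ • x) ∧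
      dist x (γ • x) ≤ A' * (wordLength (S : Set Γ) γ : ℝ) + B' :=
  stmt4_general hiso S hsymm hgen p g A B hA hU α β hα hβ hWD
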